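/- arXiv:1803.01697 — 3 statements merged into one kernel-verified Lean document; each statement's English description precedes it below -/
import Mathlib

section
/- Let f : [0,∞) → ℝ be nonnegative and differentiable, satisfying f'(t) ≤ -2 f(t) + C₁ e^{-a t} f(t)^{1/2} for all t with f(t) > 0, where C₁ > 0 and a > 0. Then there exists a constant C (depending on f(0), C₁, a) such that f(t) ≤ C (1+t)² exp(-2 min(1, a) t) for all t ≥ 0. -/
/-!
Comparison with a barrier. With `m = min 1 a` and `g x = k (1 + x) e^{-m x}`, the function `g²`
is a strict supersolution once `2k > |C₁|`: dividing the required inequality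
`-2 g² + C₁ e^{-a x} g < (g²)'` by `g > 0` leaves `C₁ e^{-a x} < 2 (g + g')`, and
`g + g' = k e^{-m x} (1 + (1 - m)(1 + x)) ≥ k e^{-m x} ≥ k e^{-a x}`.
Taking `k ≥ 1` and `k > f 0` also gives `f 0 ≤ g 0 ²`, so `f` can never cross `g²`.
-/

open Real Set

theorem le_of_hasDerivAt_of_lt_at_contact {f f' B B' : ℝ → ℝ} {a : ℝ}
    (hf : ∀ x, a ≤ x → HasDerivAt f (f' x) x) (hB : ∀ x, HasDerivAt B (B' x) x)
    (ha : f a ≤ B a) (hcontact : ∀ x, a ≤ x → f x = B x → f' x < B' x) :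
    ∀ t, a ≤ t → f t ≤ B t := fun _ ht =>
  image_le_of_deriv_right_lt_deriv_boundary
    (fun x hx => (hf x hx.1).continuousAt.continuousWithinAt)
    (fun x hx => (hf x hx.1).hasDerivWithinAt) ha hB
    (fun x hx => hcontact x hx.1) (right_mem_Icc.2 ht)

noncomputable def decayProfile (k m x : ℝ) : ℝ := k * (1 + x) * exp (-m * x)

theorem decayProfile_pos {k m x : ℝ} (hk : 0 < k) (hx : -1 < x) : 0 < decayProfile k m x := by
  unfold decayProfile
  have : 0 < 1 + x := by linarith
  positivity

theorem hasDerivAt_decayProfile (k m x : ℝ) :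
    HasDerivAt (decayProfile k m) (k * exp (-m * x) * (1 - m * (1 + x))) x := by
  have hlin : HasDerivAt (fun y => k * (1 + y)) k x := by
    simpa using ((hasDerivAt_id x).const_add 1).const_mul k
  have hexp : HasDerivAt (fun y => exp (-m * y)) (exp (-m * x) * -m) x := by
    simpa using ((hasDerivAt_id x).const_mul (-m)).exp
  exact (hlin.fun_mul hexp).congr_deriv (by ring)

theorem decayProfile_sq_mul_exp (k m x : ℝ) :
    decayProfile k m x ^ 2 = k ^ 2 * (1 + x) ^ 2 * exp (-2 * m * x) := by
  rw [decayProfile, mul_pow, mul_pow, ← exp_nat_mul]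
  push_cast
  ring_nf

theorem mul_exp_lt_two_mul_decayProfile_add_deriv {C a m k x : ℝ} (hm1 : m ≤ 1) (hma : m ≤ a)
    (hk : |C| < 2 * k) (hx : 0 ≤ x) :
    C * exp (-a * x) < 2 * (decayProfile k m x + k * exp (-m * x) * (1 - m * (1 + x))) := by
  have hexp : exp (-a * x) ≤ exp (-m * x) := exp_le_exp.2 (by nlinarith)
  have hk0 : 0 < k := by linarith [abs_nonneg C]
  have hsum : k * exp (-m * x) ≤ decayProfile k m x + k * exp (-m * x) * (1 - m * (1 + x)) := by
    have : 0 ≤ k * exp (-m * x) * ((1 - m) * (1 + x)) := by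
      have : 0 ≤ (1 - m) * (1 + x) := mul_nonneg (by linarith) (by linarith)
      positivity
    rw [decayProfile]
    linarith
  calc C * exp (-a * x) ≤ |C| * exp (-a * x) :=
        mul_le_mul_of_nonneg_right (le_abs_self C) (exp_pos _).le
    _ ≤ |C| * exp (-m * x) := mul_le_mul_of_nonneg_left hexp (abs_nonneg C)
    _ < 2 * k * exp (-m * x) := mul_lt_mul_of_pos_right hk (exp_pos _)
    _ ≤ _ := by linarith

theorem decayProfile_sq_strict_supersolution {C a m k x : ℝ} (hm1 : m ≤ 1) (hma : m ≤ a)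
    (hk : |C| < 2 * k) (hx : 0 ≤ x) :
    -2 * decayProfile k m x ^ 2 + C * exp (-a * x) * (decayProfile k m x ^ 2) ^ ((1 : ℝ) / 2)
      < 2 * decayProfile k m x * (k * exp (-m * x) * (1 - m * (1 + x))) := by
  have hg : 0 < decayProfile k m x :=
    decayProfile_pos (by linarith [abs_nonneg C]) (by linarith)
  rw [← sqrt_eq_rpow, sqrt_sq hg.le]
  nlinarith [mul_exp_lt_two_mul_decayProfile_add_deriv hm1 hma hk hx]

theorem entropy_decay_general (f f' : ℝ → ℝ) (C₁ a : ℝ)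
    (hf0 : ∀ t, 0 ≤ t → 0 ≤ f t)
    (hderiv : ∀ t, 0 ≤ t → HasDerivAt f (f' t) t)
    (hineq : ∀ t, 0 ≤ t → 0 < f t →
      f' t ≤ -2 * f t + C₁ * Real.exp (-a * t) * (f t) ^ ((1 : ℝ) / 2)) :
    ∃ C : ℝ, ∀ t, 0 ≤ t →
      f t ≤ C * (1 + t) ^ 2 * Real.exp (-2 * min 1 a * t) := by
  set m := min 1 a
  set k := f 0 + |C₁| + 1
  have hk : |C₁| < 2 * k := by linarith [hf0 0 le_rfl, abs_nonneg C₁]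
  have hstart : f 0 ≤ decayProfile k m 0 ^ 2 := by
    simp only [decayProfile, add_zero, mul_one, mul_zero, exp_zero]
    nlinarith [hf0 0 le_rfl, abs_nonneg C₁]
  have hB x : HasDerivAt (fun y => decayProfile k m y ^ 2)
      (2 * decayProfile k m x * (k * exp (-m * x) * (1 - m * (1 + x)))) x :=
    ((hasDerivAt_decayProfile k m x).fun_pow 2).congr_deriv (by simp)
  have hcontact x (hx : 0 ≤ x) (hfx : f x = decayProfile k m x ^ 2) :
      f' x < 2 * decayProfile k m x * (k * exp (-m * x) * (1 - m * (1 + x))) := by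
    have hpos : 0 < f x :=
      hfx ▸ pow_pos (decayProfile_pos (by linarith [abs_nonneg C₁]) (by linarith)) 2
    refine (hineq x hx hpos).trans_lt ?_
    rw [hfx]
    exact decayProfile_sq_strict_supersolution (min_le_left _ _) (min_le_right _ _) hk hx
  refine ⟨k ^ 2, fun t ht => ?_⟩
  rw [← decayProfile_sq_mul_exp]
  exact le_of_hasDerivAt_of_lt_at_contact hderiv hB hstart hcontact t ht

/-- If `f ≥ 0` is differentiable and satisfies
`f' t ≤ -2 f t + C₁ exp(-a t) (f t)^{1/2}` whenever `f t > 0`, then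
`f t ≤ C (1+t)² exp(-2 min(1,a) t)` for a constant `C` depending on `f 0, C₁, a`. -/
theorem entropy_decay (f f' : ℝ → ℝ) (C₁ a : ℝ) (hC₁ : 0 < C₁) (ha : 0 < a)
    (hf0 : ∀ t, 0 ≤ t → 0 ≤ f t)
    (hderiv : ∀ t, 0 ≤ t → HasDerivAt f (f' t) t)
    (hineq : ∀ t, 0 ≤ t → 0 < f t →
      f' t ≤ -2 * f t + C₁ * Real.exp (-a * t) * (f t) ^ ((1 : ℝ) / 2)) :
    ∃ C : ℝ, ∀ t, 0 ≤ t →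
      f t ≤ C * (1 + t) ^ 2 * Real.exp (-2 * min 1 a * t) :=
  entropy_decay_general f f' C₁ a hf0 hderiv hineq
end

section
/- Let f : [0,∞) → ℝ be nonnegative differentiable with f'(t) ≤ -2 f(t) + C₄ e^{-at} for all t ≥ 0, where C₄ > 0 and a > 0. Then f(t) ≤ e^{-2t} f(0) + C₄ (1+t) e^{-min(2, a) t} for all t ≥ 0. -/
/-!
Multiplying by the integrating factor `e^{2s}` turns the differential inequality into
`(e^{2s} f)' ≤ C₄ e^{(2-a)s}`, and on `[0, t]` the right-hand side is at most
`C₄ e^{(2 - min(2,a)) t}`. The mean value inequality then gives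
`e^{2t} f t ≤ f 0 + C₄ t e^{(2 - min(2,a)) t}`.
-/

open Real Set

lemma hasDerivAt_exp_mul_mul {f : ℝ → ℝ} {f' k s : ℝ} (hf : HasDerivAt f f' s) :
    HasDerivAt (fun s => exp (k * s) * f s) (exp (k * s) * (f' + k * f s)) s := by
  have hexp : HasDerivAt (fun s => exp (k * s)) (exp (k * s) * k) s := by
    simpa using ((hasDerivAt_id s).const_mul k).exp
  exact (hexp.mul hf).congr_deriv (by ring)

lemma exp_mul_le_add_mul_of_deriv_le {f f' : ℝ → ℝ} {k M t : ℝ} (ht : 0 ≤ t)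
    (hderiv : ∀ s ∈ Icc 0 t, HasDerivAt f (f' s) s)
    (hineq : ∀ s ∈ Icc 0 t, exp (k * s) * (f' s + k * f s) ≤ M) :
    exp (k * t) * f t ≤ f 0 + M * t := by
  have hg : ∀ s ∈ Icc 0 t, HasDerivAt (fun s => exp (k * s) * f s)
      (exp (k * s) * (f' s + k * f s)) s :=
    fun s hs => hasDerivAt_exp_mul_mul (hderiv s hs)
  have hmvt := (convex_Icc 0 t).image_sub_le_mul_sub_of_deriv_le
    (fun s hs => (hg s hs).continuousAt.continuousWithinAt)
    (fun s hs => (hg s (interior_subset hs)).differentiableAt.differentiableWithinAt)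
    (fun s hs => (hg s (interior_subset hs)).deriv ▸ hineq s (interior_subset hs))
    0 (left_mem_Icc.mpr ht) t (right_mem_Icc.mpr ht) ht
  simp only [mul_zero, exp_zero, one_mul, sub_zero] at hmvt
  linarith

lemma sub_mul_le_sub_min_mul {k a s t : ℝ} (hs : 0 ≤ s) (hst : s ≤ t) :
    (k - a) * s ≤ (k - min k a) * t :=
  calc (k - a) * s ≤ (k - min k a) * s := by gcongr; exact min_le_right k a
    _ ≤ (k - min k a) * t := by gcongr; exact sub_nonneg.mpr (min_le_left k a)

lemma le_exp_mul_add_mul_exp_of_deriv_le {f f' : ℝ → ℝ} {k a C t : ℝ} (hC : 0 ≤ C)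
    (ht : 0 ≤ t) (hderiv : ∀ s ∈ Icc 0 t, HasDerivAt f (f' s) s)
    (hineq : ∀ s ∈ Icc 0 t, f' s ≤ -k * f s + C * exp (-a * s)) :
    f t ≤ exp (-k * t) * f 0 + C * t * exp (-(min k a) * t) := by
  have hforcing : ∀ s ∈ Icc 0 t,
      exp (k * s) * (f' s + k * f s) ≤ C * exp ((k - min k a) * t) := by
    intro s hs
    calc exp (k * s) * (f' s + k * f s) ≤ exp (k * s) * (C * exp (-a * s)) := by
          gcongr; linarith [hineq s hs]
      _ = C * exp ((k - a) * s) := by rw [mul_left_comm, ← exp_add]; ring_nf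
      _ ≤ C * exp ((k - min k a) * t) :=
          mul_le_mul_of_nonneg_left (exp_le_exp.mpr (sub_mul_le_sub_min_mul hs.1 hs.2)) hC
  have hbound := exp_mul_le_add_mul_of_deriv_le ht hderiv hforcing
  have hexp_cancel : exp (-k * t) * exp (k * t) = 1 := by rw [← exp_add]; simp
  have hexp_shift : exp (-k * t) * exp ((k - min k a) * t) = exp (-(min k a) * t) := by
    rw [← exp_add]; ring_nf
  calc f t = exp (-k * t) * (exp (k * t) * f t) := by rw [← mul_assoc, hexp_cancel, one_mul]
    _ ≤ exp (-k * t) * (f 0 + C * exp ((k - min k a) * t) * t) := by gcongr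
    _ = exp (-k * t) * f 0 + C * t * exp (-(min k a) * t) := by
        rw [← hexp_shift]; ring

theorem decay_bound_general (f f' : ℝ → ℝ) (C₄ a : ℝ) (hC₄ : 0 < C₄)
    (hderiv : ∀ t, 0 ≤ t → HasDerivAt f (f' t) t)
    (hineq : ∀ t, 0 ≤ t → f' t ≤ -2 * f t + C₄ * Real.exp (-a * t)) :
    ∀ t, 0 ≤ t →
      f t ≤ Real.exp (-2 * t) * f 0 + C₄ * (1 + t) * Real.exp (-(min 2 a) * t) := by
  intro t ht
  have hbound := le_exp_mul_add_mul_exp_of_deriv_le hC₄.le ht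
    (fun s hs => hderiv s hs.1) (fun s hs => hineq s hs.1)
  have hextra : 0 ≤ C₄ * Real.exp (-(min 2 a) * t) := by positivity
  linarith

/-- If `f ≥ 0` is differentiable with `f' t ≤ -2 f t + C₄ e^{-a t}`, then
`f t ≤ e^{-2t} f 0 + C₄ (1+t) e^{-min(2,a) t}` for all `t ≥ 0`. -/
theorem decay_bound (f f' : ℝ → ℝ) (C₄ a : ℝ) (hC₄ : 0 < C₄) (ha : 0 < a)
    (hf0 : ∀ t, 0 ≤ t → 0 ≤ f t)
    (hderiv : ∀ t, 0 ≤ t → HasDerivAt f (f' t) t)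
    (hineq : ∀ t, 0 ≤ t → f' t ≤ -2 * f t + C₄ * Real.exp (-a * t)) :
    ∀ t, 0 ≤ t →
      f t ≤ Real.exp (-2 * t) * f 0 + C₄ * (1 + t) * Real.exp (-(min 2 a) * t) :=
  decay_bound_general f f' C₄ a hC₄ hderiv hineq
end

section
/- Let f : [0,∞) → ℝ be nonnegative differentiable and suppose that for all t, either f(t) ≤ (C²/8) e^{-2θt}, or f'(t) ≤ -2 f(t) + √2 C e^{-θt} f(t)^{1/2}, where C > 0 and θ > 0. Then there is a constant C' (depending on f(0), C, θ) such that f(t) ≤ C' (1+t)² e^{-2 min(1, θ) t} for all t ≥ 0. -/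
/-!
Compare `f` with the barrier `B = g²`, `g x = K (1 + x) e^{-m x}`, where `m = min 1 θ` and
`K = √(f 0) + C`. Since `m ≤ θ` and `m ≤ 1`, both `g` and `g + g'` dominate `K e^{-θ x}`. At a
first contact point `f x = g x ²` the first alternative of the dichotomy is then impossible
(`C² / 8 < K²`), and the second gives `f' < -2 g² + 2 K e^{-θ x} g ≤ 2 g g' = B'`, so `f` can
never cross `B`.
-/

open Real Set

namespace DichotomyDecay

noncomputable def barrier (K m x : ℝ) : ℝ := K * (1 + x) * exp (-m * x)

noncomputable def barrierDeriv (K m x : ℝ) : ℝ := K * exp (-m * x) * (1 - m - m * x)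

theorem hasDerivAt_barrier (K m x : ℝ) : HasDerivAt (barrier K m) (barrierDeriv K m x) x := by
  have hexp : HasDerivAt (fun x => exp (-m * x)) (exp (-m * x) * -m) x := by
    simpa using ((hasDerivAt_id x).const_mul (-m)).exp
  have h := (((hasDerivAt_id' x).const_add 1).const_mul K).mul hexp
  unfold barrier barrierDeriv
  exact h.congr_deriv (by ring)

theorem exp_neg_mul_le_exp_neg_mul {m θ x : ℝ} (hmθ : m ≤ θ) (hx : 0 ≤ x) :
    exp (-θ * x) ≤ exp (-m * x) :=
  exp_le_exp.2 (by nlinarith)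

theorem mul_exp_le_barrier {K m θ x : ℝ} (hK : 0 ≤ K) (hmθ : m ≤ θ) (hx : 0 ≤ x) :
    K * exp (-θ * x) ≤ barrier K m x :=
  calc K * exp (-θ * x) ≤ K * 1 * exp (-m * x) := by
        rw [mul_one]; exact mul_le_mul_of_nonneg_left (exp_neg_mul_le_exp_neg_mul hmθ hx) hK
    _ ≤ barrier K m x := by unfold barrier; gcongr; linarith

theorem mul_exp_le_barrier_add_barrierDeriv {K m θ x : ℝ} (hK : 0 ≤ K) (hm1 : m ≤ 1)
    (hmθ : m ≤ θ) (hx : 0 ≤ x) :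
    K * exp (-θ * x) ≤ barrier K m x + barrierDeriv K m x := by
  have hsum : barrier K m x + barrierDeriv K m x
      = K * exp (-m * x) + K * exp (-m * x) * ((1 - m) * (1 + x)) := by
    simp only [barrier, barrierDeriv]; ring
  have hextra : 0 ≤ K * exp (-m * x) * ((1 - m) * (1 + x)) := by
    have : 0 ≤ 1 - m := by linarith
    positivity
  calc K * exp (-θ * x) ≤ K * exp (-m * x) :=
        mul_le_mul_of_nonneg_left (exp_neg_mul_le_exp_neg_mul hmθ hx) hK
    _ ≤ barrier K m x + barrierDeriv K m x := by rw [hsum]; exact le_add_of_nonneg_right hextra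

theorem exp_neg_two_mul_mul (a x : ℝ) : exp (-2 * a * x) = exp (-a * x) ^ 2 := by
  rw [← exp_nat_mul]; ring_nf

/-- Here `v, v'`, `y, y'` and `e` stand for `f x, f' x`, `g x, g' x` and `e^{-θ x}` at a contact
point `f x = g x ²`. -/
theorem lt_two_mul_of_dichotomy {C K e y y' v v' : ℝ} (hC : 0 < C) (hCK : C ≤ K) (he : 0 < e)
    (hy : K * e ≤ y) (hy' : K * e ≤ y + y') (hv : v = y ^ 2)
    (hdich : v ≤ C ^ 2 / 8 * e ^ 2 ∨ v' ≤ -2 * v + √2 * C * e * v ^ ((1 : ℝ) / 2)) :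
    v' < 2 * y * y' := by
  have hKe : C * e ≤ K * e := mul_le_mul_of_nonneg_right hCK he.le
  have hCe : 0 < C * e := mul_pos hC he
  have hypos : 0 < y := by linarith
  rcases hdich with hsmall | hgronwall
  · nlinarith [mul_self_le_mul_self hCe.le (hKe.trans hy)]
  · have hsqrt : v ^ ((1 : ℝ) / 2) = y := by
      rw [← sqrt_eq_rpow, hv, sqrt_sq hypos.le]
    have hsqrt2 : √2 < 2 := sqrt_two_lt_three_halves.trans (by norm_num)
    rw [hsqrt, hv] at hgronwall
    nlinarith [mul_lt_mul_of_pos_right hsqrt2 (mul_pos hCe hypos)]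

end DichotomyDecay

open DichotomyDecay in
theorem dichotomy_decay_general (f f' : ℝ → ℝ) (C θ : ℝ) (hC : 0 < C)
    (hderiv : ∀ t, 0 ≤ t → HasDerivAt f (f' t) t)
    (hdich : ∀ t, 0 ≤ t →
      f t ≤ (C ^ 2 / 8) * Real.exp (-2 * θ * t) ∨
      f' t ≤ -2 * f t + Real.sqrt 2 * C * Real.exp (-θ * t) * (f t) ^ ((1 : ℝ) / 2)) :
    ∃ C' : ℝ, ∀ t, 0 ≤ t →
      f t ≤ C' * (1 + t) ^ 2 * Real.exp (-2 * min 1 θ * t) := by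
  set m := min 1 θ
  set K := √(f 0) + C
  have hCK : C ≤ K := le_add_of_nonneg_left (sqrt_nonneg _)
  have hK : 0 ≤ K := hC.le.trans hCK
  have hstart : f 0 ≤ barrier K m 0 ^ 2 :=
    calc f 0 ≤ √(f 0) ^ 2 := sq_sqrt' (x := f 0) ▸ le_max_left _ _
      _ ≤ barrier K m 0 ^ 2 := by
        simp only [barrier, mul_zero, add_zero, exp_zero, mul_one]
        gcongr
        exact le_add_of_nonneg_right hC.le
  have hB : ∀ x, HasDerivAt (fun x => barrier K m x ^ 2)
      (2 * barrier K m x * barrierDeriv K m x) x := fun x => by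
    simpa using (hasDerivAt_barrier K m x).fun_pow 2
  refine ⟨K ^ 2, fun t ht => ?_⟩
  have hfence : f t ≤ barrier K m t ^ 2 :=
    image_le_of_deriv_right_lt_deriv_boundary
      (fun x hx => (hderiv x hx.1).continuousAt.continuousWithinAt)
      (fun x hx => (hderiv x hx.1).hasDerivWithinAt) hstart hB
      (fun x hx hcontact => lt_two_mul_of_dichotomy hC hCK (exp_pos _)
        (mul_exp_le_barrier hK (min_le_right 1 θ) hx.1)
        (mul_exp_le_barrier_add_barrierDeriv hK (min_le_left 1 θ) (min_le_right 1 θ) hx.1)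
        hcontact (exp_neg_two_mul_mul θ x ▸ hdich x hx.1))
      ⟨ht, le_rfl⟩
  calc f t ≤ barrier K m t ^ 2 := hfence
    _ = K ^ 2 * (1 + t) ^ 2 * exp (-2 * m * t) := by rw [barrier, exp_neg_two_mul_mul]; ring

/-- Dichotomy argument: if at each time either `f t ≤ (C²/8) e^{-2θt}` or the
Gronwall differential inequality
`f' t ≤ -2 f t + √2 C e^{-θt} (f t)^{1/2}` holds, then
`f t ≤ C' (1+t)² e^{-2 min(1,θ) t}` for some constant `C'`. -/
theorem dichotomy_decay (f f' : ℝ → ℝ) (C θ : ℝ) (hC : 0 < C) (hθ : 0 < θ)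
    (hf0 : ∀ t, 0 ≤ t → 0 ≤ f t)
    (hderiv : ∀ t, 0 ≤ t → HasDerivAt f (f' t) t)
    (hdich : ∀ t, 0 ≤ t →
      f t ≤ (C ^ 2 / 8) * Real.exp (-2 * θ * t) ∨
      f' t ≤ -2 * f t + Real.sqrt 2 * C * Real.exp (-θ * t) * (f t) ^ ((1 : ℝ) / 2)) :
    ∃ C' : ℝ, ∀ t, 0 ≤ t →
      f t ≤ C' * (1 + t) ^ 2 * Real.exp (-2 * min 1 θ * t) :=
  dichotomy_decay_general f f' C θ hC hderiv hdich
end
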